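/- arXiv:1904.06772 — 7 statements merged into one kernel-verified Lean document; each statement's English description precedes it below -/
import Mathlib

section
/- Let H_X, H_C, H_P be finite-dimensional complex inner product spaces, let N₁ : H_X →ₗ[ℂ] H_C and N₂ : H_C →ₗ[ℂ] H_P be linear maps, let X be a type, v : X → H_X, and define the state family Ψ : X → H_P by Ψ x = N₂ (N₁ (v x)). Then there exist linear maps E : H_P →ₗ[ℂ] H_C (the encoder) and D : H_C →ₗ[ℂ] H_P (the decoder) such that D (E (Ψ x)) = Ψ x for every x ∈ X, and moreover E acts isometrically on the span of the family, i.e. ⟪E u, E w⟫ = ⟪u, w⟫ for all u, w in the ℂ-linear span of {Ψ x | x ∈ X}. In particular the family can be exactly compressed into a memory space of dimension dim H_C. -/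
/-!
The span `S` of the family lies in the range of `N₂`, so `dim S ≤ dim H_C` and `S` embeds
isometrically into `H_C` (send an orthonormal basis of `S` to part of one of `H_C`). The encoder
is this isometry precomposed with a linear retraction of `H_P` onto `S`; the decoder is a linear
left inverse of the isometry followed by the inclusion of `S`.
-/

open Module

section

variable {𝕜 F G : Type*} [RCLike 𝕜]
  [NormedAddCommGroup F] [InnerProductSpace 𝕜 F] [NormedAddCommGroup G] [InnerProductSpace 𝕜 G]

theorem exists_linearIsometry_of_finrank_le [FiniteDimensional 𝕜 F] [FiniteDimensional 𝕜 G]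
    (h : finrank 𝕜 F ≤ finrank 𝕜 G) : Nonempty (F →ₗᵢ[𝕜] G) := by
  let bF := stdOrthonormalBasis 𝕜 F
  let bG := stdOrthonormalBasis 𝕜 G
  let f := bF.toBasis.constr 𝕜 fun i => bG (Fin.castLE h i)
  have hf : f ∘ bF.toBasis = bG ∘ Fin.castLE h := funext fun i => bF.toBasis.constr_basis 𝕜 _ i
  refine ⟨f.isometryOfOrthonormal (v := bF.toBasis) ?_ ?_⟩
  · rw [bF.coe_toBasis]
    exact bF.orthonormal
  · rw [hf]
    exact bG.orthonormal.comp _ (Fin.castLE_injective h)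

theorem Submodule.exists_encoder_decoder_of_linearIsometry {S : Submodule 𝕜 F}
    (J : S →ₗᵢ[𝕜] G) :
    ∃ (E : F →ₗ[𝕜] G) (D : G →ₗ[𝕜] F),
      (∀ u ∈ S, D (E u) = u) ∧ ∀ u ∈ S, ∀ w ∈ S, inner 𝕜 (E u) (E w) = inner 𝕜 u w := by
  obtain ⟨p, hp⟩ := S.subtype.exists_leftInverse_of_injective S.ker_subtype
  obtain ⟨q, hq⟩ := J.toLinearMap.exists_leftInverse_of_injective
    (LinearMap.ker_eq_bot_of_injective J.injective)
  have hpS : ∀ u (hu : u ∈ S), p u = ⟨u, hu⟩ := fun u hu => LinearMap.congr_fun hp ⟨u, hu⟩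
  have hqJ : ∀ s, q (J s) = s := LinearMap.congr_fun hq
  refine ⟨J.toLinearMap ∘ₗ p, S.subtype ∘ₗ q, fun u hu => ?_, fun u hu w hw => ?_⟩
  · simp [hpS u hu, hqJ]
  · simp [hpS u hu, hpS w hw]

theorem Submodule.exists_encoder_decoder_of_finrank_le [FiniteDimensional 𝕜 G]
    {S : Submodule 𝕜 F} [FiniteDimensional 𝕜 S] (h : finrank 𝕜 S ≤ finrank 𝕜 G) :
    ∃ (E : F →ₗ[𝕜] G) (D : G →ₗ[𝕜] F),
      (∀ u ∈ S, D (E u) = u) ∧ ∀ u ∈ S, ∀ w ∈ S, inner 𝕜 (E u) (E w) = inner 𝕜 u w :=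
  let ⟨J⟩ := exists_linearIsometry_of_finrank_le h
  S.exists_encoder_decoder_of_linearIsometry J

end

theorem exact_compression_of_factorization_general
    {H_X H_C H_P : Type*}
    [NormedAddCommGroup H_X] [InnerProductSpace ℂ H_X]
    [NormedAddCommGroup H_C] [InnerProductSpace ℂ H_C] [FiniteDimensional ℂ H_C]
    [NormedAddCommGroup H_P] [InnerProductSpace ℂ H_P]
    (N₁ : H_X →ₗ[ℂ] H_C) (N₂ : H_C →ₗ[ℂ] H_P)
    {X : Type*} (v : X → H_X) (Ψ : X → H_P)
    (hΨ : ∀ x, Ψ x = N₂ (N₁ (v x))) :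
    ∃ (E : H_P →ₗ[ℂ] H_C) (D : H_C →ₗ[ℂ] H_P),
      (∀ x, D (E (Ψ x)) = Ψ x) ∧
      (∀ u w : H_P, u ∈ Submodule.span ℂ (Set.range Ψ) →
        w ∈ Submodule.span ℂ (Set.range Ψ) →
        (inner ℂ (E u) (E w) : ℂ) = (inner ℂ u w : ℂ)) := by
  set S := Submodule.span ℂ (Set.range Ψ)
  have hS : S ≤ LinearMap.range N₂ :=
    Submodule.span_le.mpr (Set.range_subset_iff.mpr fun x => ⟨N₁ (v x), (hΨ x).symm⟩)
  have := Submodule.finiteDimensional_of_le hS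
  have hdim : finrank ℂ S ≤ finrank ℂ H_C :=
    (Submodule.finrank_mono hS).trans N₂.finrank_range_le
  obtain ⟨E, D, hDE, hE⟩ := S.exists_encoder_decoder_of_finrank_le hdim
  exact ⟨E, D, fun x => hDE _ (Submodule.subset_span ⟨x, rfl⟩),
    fun u w hu hw => hE u hu w hw⟩

/-- A cut-induced factorization `Ψ x = N₂ (N₁ (v x))` of a tensor-network
state family yields an exact compression protocol `(E, D)` into the cut space `H_C`,
with the encoder acting isometrically on the span of the family. -/
theorem exact_compression_of_factorization
    {H_X H_C H_P : Type*}
    [NormedAddCommGroup H_X] [InnerProductSpace ℂ H_X] [FiniteDimensional ℂ H_X]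
    [NormedAddCommGroup H_C] [InnerProductSpace ℂ H_C] [FiniteDimensional ℂ H_C]
    [NormedAddCommGroup H_P] [InnerProductSpace ℂ H_P] [FiniteDimensional ℂ H_P]
    (N₁ : H_X →ₗ[ℂ] H_C) (N₂ : H_C →ₗ[ℂ] H_P)
    {X : Type*} (v : X → H_X) (Ψ : X → H_P)
    (hΨ : ∀ x, Ψ x = N₂ (N₁ (v x))) :
    ∃ (E : H_P →ₗ[ℂ] H_C) (D : H_C →ₗ[ℂ] H_P),
      (∀ x, D (E (Ψ x)) = Ψ x) ∧
      (∀ u w : H_P, u ∈ Submodule.span ℂ (Set.range Ψ) →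
        w ∈ Submodule.span ℂ (Set.range Ψ) →
        (inner ℂ (E u) (E w) : ℂ) = (inner ℂ u w : ℂ)) :=
  exact_compression_of_factorization_general N₁ N₂ v Ψ hΨ
end

section
/- Let ι be a finite index set (a Finset) and let d : ι → ℕ satisfy 2 ≤ d e for every e ∈ ι. Then ∑_{e ∈ ι} logb 2 (d e) ≤ (logb 2 3) · ∑_{e ∈ ι} ⌊logb 2 (d e)⌋, where logb 2 denotes the base-2 real logarithm and ⌊·⌋ the integer floor (cast to ℝ). -/
/-! With `k = ⌊log₂ n⌋`, the claim `log₂ n ≤ k log₂ 3` says `n ≤ 3 ^ k`.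
Since `n < 2 ^ (k + 1)`, this follows from `2 ^ (k + 1) ≤ 3 ^ k + 1` for `k ≥ 1`;
summing over the edges gives the theorem. -/

theorem Nat.two_pow_succ_le_three_pow_add_one {k : ℕ} (hk : 1 ≤ k) :
    2 ^ (k + 1) ≤ 3 ^ k + 1 := by
  induction k, hk using Nat.le_induction with
  | base => norm_num
  | succ k _ ih => rw [pow_succ, pow_succ 3]; omega

theorem Nat.le_three_pow_log_two (n : ℕ) : n ≤ 3 ^ Nat.log 2 n := by
  have hlt := Nat.lt_pow_succ_log_self one_lt_two n
  rcases Nat.eq_zero_or_pos (Nat.log 2 n) with hk | hk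
  · rw [hk] at hlt ⊢; omega
  · have := Nat.two_pow_succ_le_three_pow_add_one hk; omega

theorem Real.logb_two_natCast_le_logb_three_mul_floor (n : ℕ) :
    Real.logb 2 n ≤ Real.logb 2 3 * ⌊Real.logb 2 n⌋ := by
  rcases Nat.eq_zero_or_pos n with rfl | hn
  · simp
  have hfloor : ⌊Real.logb 2 n⌋ = Nat.log 2 n := by
    exact_mod_cast (Real.floor_logb_natCast (b := 2) n.cast_nonneg).trans (Int.log_natCast 2 n)
  calc Real.logb 2 n ≤ Real.logb 2 ((3 : ℝ) ^ Nat.log 2 n) :=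
        Real.logb_le_logb_of_le one_lt_two (by positivity)
          (by exact_mod_cast n.le_three_pow_log_two)
    _ = Real.logb 2 3 * ⌊Real.logb 2 n⌋ := by rw [Real.logb_pow, hfloor, mul_comm]; norm_cast

theorem sum_logb_le_logb_three_mul_sum_floor_general
    {α : Type*} (ι : Finset α) (d : α → ℕ) :
    ∑ e ∈ ι, Real.logb 2 (d e) ≤
      Real.logb 2 3 * ∑ e ∈ ι, (⌊Real.logb 2 (d e)⌋ : ℝ) := by
  rw [Finset.mul_sum]
  exact Finset.sum_le_sum fun e _ => Real.logb_two_natCast_le_logb_three_mul_floor (d e)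

/-- Rounding each edge dimension down to a power of two changes the
capacity of a cut by at most a multiplicative factor `log₂ 3`. -/
theorem sum_logb_le_logb_three_mul_sum_floor
    {α : Type*} (ι : Finset α) (d : α → ℕ) (hd : ∀ e ∈ ι, 2 ≤ d e) :
    ∑ e ∈ ι, Real.logb 2 (d e) ≤
      Real.logb 2 3 * ∑ e ∈ ι, (⌊Real.logb 2 (d e)⌋ : ℝ) :=
  sum_logb_le_logb_three_mul_sum_floor_general ι d
end

section
/- Fix natural numbers n, n', d_p, d_c and matrices A : Fin n → Fin d_p → Matrix (Fin d_c) (Fin d_c) ℂ and B : Fin n' → Fin d_p → Matrix (Fin d_c) (Fin d_c) ℂ. For L, R : Fin d_c → ℂ define the bipartite matrix product state Ψ_{L,R} : ((Fin n → Fin d_p) × (Fin n' → Fin d_p)) → ℂ by Ψ_{L,R}(i, j) = L ⬝ᵥ ((A 0 (i 0)) * ⋯ * (A (n-1) (i (n-1))) * (B 0 (j 0)) * ⋯ * (B (n'-1) (j (n'-1)))) *ᵥ R. Then there exists a linear map P : ((Fin n → Fin d_p) → ℂ) →ₗ[ℂ] ((Fin n → Fin d_p) → ℂ) with P ∘ P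 = P and finrank ℂ (range P) ≤ d_c², such that for all L, R and all (i, j): P (fun i' => Ψ_{L,R}(i', j)) i = Ψ_{L,R}(i, j); that is, applying P ⊗ id to Ψ_{L,R} leaves it invariant. -/
open Matrix

/-! Every amplitude `Ψ_{L,R}(·, j)`, seen as a function of Alice's indices, is a linear
combination of the `d_c²` functions `i ↦ (A_{i₀} ⋯ A_{i_{n-1}})_{ab}`, with coefficients
`L_a (B_j R)_b` depending only on the boundary vectors and Bob's indices. Any idempotent
with range the span of these functions therefore does the job. -/

theorem dotProduct_mulVec_mem_span_entries {ι m n R : Type*} [CommSemiring R]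
    [Fintype m] [Fintype n] (M : ι → Matrix m n R) (v : m → R) (w : n → R) :
    (fun i => v ⬝ᵥ (M i *ᵥ w)) ∈
      Submodule.span R (Set.range fun ab : m × n => fun i => M i ab.1 ab.2) := by
  have hsum : (fun i => v ⬝ᵥ (M i *ᵥ w)) =
      ∑ ab : m × n, (v ab.1 * w ab.2) • fun i => M i ab.1 ab.2 := by
    ext i
    simp only [dotProduct, mulVec, Finset.sum_apply, Pi.smul_apply, smul_eq_mul,
      Fintype.sum_prod_type, Finset.mul_sum]
    exact Finset.sum_congr rfl fun a _ => Finset.sum_congr rfl fun b _ => by ring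
  rw [hsum]
  exact Submodule.sum_mem _ fun ab _ => Submodule.smul_mem _ _ (Submodule.subset_span ⟨ab, rfl⟩)

/-- Local compression of a bipartite MPS with unknown boundary
conditions: there is an idempotent map `P` of rank at most `d_c²` acting only on the
first `n` sites that leaves every state `Ψ_{L,R}` invariant. -/
theorem mps_local_compression
    (n n' d_p d_c : ℕ)
    (A : Fin n → Fin d_p → Matrix (Fin d_c) (Fin d_c) ℂ)
    (B : Fin n' → Fin d_p → Matrix (Fin d_c) (Fin d_c) ℂ)
    (Ψ : (Fin d_c → ℂ) → (Fin d_c → ℂ) → ((Fin n → Fin d_p) × (Fin n' → Fin d_p)) → ℂ)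
    (hΨ : ∀ L R i j, Ψ L R (i, j) =
      L ⬝ᵥ (((List.ofFn fun k => A k (i k)).prod *
              (List.ofFn fun k => B k (j k)).prod).mulVec R)) :
    ∃ P : ((Fin n → Fin d_p) → ℂ) →ₗ[ℂ] ((Fin n → Fin d_p) → ℂ),
      P ∘ₗ P = P ∧
      Module.finrank ℂ (LinearMap.range P) ≤ d_c ^ 2 ∧
      ∀ (L R : Fin d_c → ℂ) (i : Fin n → Fin d_p) (j : Fin n' → Fin d_p),
        P (fun i' => Ψ L R (i', j)) i = Ψ L R (i, j) := by
  set entries : Fin d_c × Fin d_c → (Fin n → Fin d_p) → ℂ :=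
    fun ab i => (List.ofFn fun k => A k (i k)).prod ab.1 ab.2
  set V := Submodule.span ℂ (Set.range entries)
  obtain ⟨W, hW⟩ := V.exists_isCompl
  refine ⟨V.projection W hW, Submodule.isIdempotentElem_projection hW, ?_, fun L R i j => ?_⟩
  · calc Module.finrank ℂ (LinearMap.range (V.projection W hW))
        = (Set.range entries).finrank ℂ := by rw [Submodule.range_projection]; rfl
      _ ≤ Fintype.card (Fin d_c × Fin d_c) := finrank_range_le_card entries
      _ = d_c ^ 2 := by simp [sq]
  · have hmem : (fun i' => Ψ L R (i', j)) ∈ V := by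
      simp only [hΨ, ← mulVec_mulVec]
      exact dotProduct_mulVec_mem_span_entries _ L _
    exact congrFun (Submodule.projection_apply_of_mem_left hW hmem) i
end

section
/- Fix natural numbers n, d_p, d_c. For a site tensor A : Fin d_p → Matrix (Fin d_c) (Fin d_c) ℂ and boundary vectors L, R : Fin d_c → ℂ, define the site-independent matrix product state Ψ_{A,L,R} : (Fin n → Fin d_p) → ℂ by Ψ_{A,L,R}(i) = L ⬝ᵥ ((A (i 0)) * (A (i 1)) * ⋯ * (A (i (n-1)))) *ᵥ R. Then the ℂ-linear span of the set {Ψ_{A,L,R} | A, L, R} (over all site tensors A and all boundary vectors L, R) has dimension at most d_c² · Nat.choose (n + d_c²·d_p − 1) (d_c²·d_p − 1). -/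
/-!
Expanding `L ⬝ᵥ A_{i₁} ⋯ A_{iₙ} *ᵥ R` as a sum over bond paths `j₀, …, jₙ`, the summand
`L j₀ · ∏ₖ A_{iₖ} jₖ₋₁ jₖ · R jₙ` depends only on the endpoints `(j₀, jₙ)` and on the multiset of
triples `(iₖ, jₖ₋₁, jₖ)`, because the product is commutative. Hence every site-independent MPS is
the image, under one fixed linear map, of a function on
`Symⁿ(Fin d_p × Fin d_c × Fin d_c) × Fin d_c × Fin d_c`,
a space of dimension `d_c² · multichoose (d_c² d_p) n`. This is the coordinate form of the
symmetric-subspace argument for `|L⟩ ⊗ |A⟩^{⊗n} ⊗ |R⟩`.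
-/

open Matrix

-- Equality unless `D = 0 < n`, where truncated subtraction makes the right side `1`.
theorem Nat.multichoose_le_choose_pred (D n : ℕ) :
    Nat.multichoose D n ≤ (n + D - 1).choose (D - 1) := by
  rcases D with _ | D
  · cases n <;> simp [Nat.multichoose_zero_succ]
  · rw [Nat.multichoose_eq, show D + 1 + n - 1 = D + n by omega,
      show n + (D + 1) - 1 = D + n by omega, Nat.add_sub_cancel, Nat.choose_symm_add]

open Finset

theorem Matrix.dotProduct_list_ofFn_prod_mulVec {R ι : Type*} [CommSemiring R] [Fintype ι]
    [DecidableEq ι] : ∀ (m : ℕ) (M : Fin m → Matrix ι ι R) (u v : ι → R),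
    u ⬝ᵥ (List.ofFn M).prod *ᵥ v
      = ∑ j : Fin (m + 1) → ι,
          u (j 0) * (∏ k : Fin m, M k (j k.castSucc) (j k.succ)) * v (j (Fin.last m))
  | 0, M, u, v => by
    rw [List.ofFn_zero, List.prod_nil, one_mulVec, dotProduct]
    exact Fintype.sum_equiv (Equiv.funUnique (Fin 1) ι).symm _ _ (fun a => by simp)
  | m + 1, M, u, v => by
    rw [List.ofFn_succ, List.prod_cons, ← mulVec_mulVec, dotProduct_mulVec,
      dotProduct_list_ofFn_prod_mulVec m (fun k => M k.succ) (u ᵥ* M 0) v,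
      ← Fintype.sum_equiv (Fin.consEquiv (fun _ : Fin (m + 2) => ι)) _ _ (fun _ => rfl),
      Fintype.sum_prod_type, sum_comm]
    refine sum_congr rfl fun j _ => ?_
    simp only [Fin.consEquiv_apply, Fin.cons_zero, Fin.cons_succ, Fin.prod_univ_succ,
      Fin.castSucc_zero, ← Fin.succ_castSucc, ← Fin.succ_last, vecMul, dotProduct, sum_mul]
    exact sum_congr rfl fun a _ => by ring

section SiteIndependentMPS

variable (R : Type*) {σ ι : Type*} [CommSemiring R] [Fintype ι] (n : ℕ)

def siteData (i : Fin n → σ) (j : Fin (n + 1) → ι) : Sym (σ × ι × ι) n :=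
  ⟨univ.val.map fun k => (i k, j k.castSucc, j k.succ), by simp⟩

variable (σ ι) in
def simpsContraction : (Sym (σ × ι × ι) n × ι × ι → R) →ₗ[R] ((Fin n → σ) → R) where
  toFun c i := ∑ j : Fin (n + 1) → ι, c (siteData n i j, j 0, j (Fin.last n))
  map_add' c c' := by funext i; simp [sum_add_distrib]
  map_smul' r c := by funext i; simp [mul_sum]

variable {R n} [DecidableEq ι]

theorem simps_mem_range_simpsContraction (A : σ → Matrix ι ι R) (u v : ι → R) :
    (fun i : Fin n → σ => u ⬝ᵥ (List.ofFn fun k => A (i k)).prod *ᵥ v) ∈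
      LinearMap.range (simpsContraction R σ ι n) := by
  refine ⟨fun s => u s.2.1 * (s.1.1.map fun t => A t.1 t.2.1 t.2.2).prod * v s.2.2, ?_⟩
  funext i
  rw [dotProduct_list_ofFn_prod_mulVec]
  refine sum_congr rfl fun j _ => ?_
  simp only [siteData, Multiset.map_map, Function.comp_def, prod_eq_multiset_prod]

theorem finrank_span_simps_le (K : Type*) [Field K] [Fintype σ] [DecidableEq σ] :
    Module.finrank K (Submodule.span K
      { Ψ : (Fin n → σ) → K | ∃ (A : σ → Matrix ι ι K) (u v : ι → K),
          Ψ = fun i => u ⬝ᵥ (List.ofFn fun k => A (i k)).prod *ᵥ v }) ≤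
      Fintype.card (Sym (σ × ι × ι) n × ι × ι) := by
  calc _ ≤ Module.finrank K (LinearMap.range (simpsContraction K σ ι n)) := by
        refine Submodule.finrank_mono (Submodule.span_le.2 ?_)
        rintro Ψ ⟨A, u, v, rfl⟩
        exact simps_mem_range_simpsContraction A u v
    _ ≤ _ := (LinearMap.finrank_range_le _).trans (Module.finrank_fintype_fun_eq_card K).le

end SiteIndependentMPS

/-- The family of site-independent matrix product states (over all site
tensors `A` and boundary vectors `L, R`) spans a subspace of dimension at most
`d_c² · C(n + d_c²·d_p − 1, d_c²·d_p − 1)`. -/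
theorem simps_span_finrank_le
    (n d_p d_c : ℕ) :
    Module.finrank ℂ (Submodule.span ℂ
      { Ψ : (Fin n → Fin d_p) → ℂ |
        ∃ (A : Fin d_p → Matrix (Fin d_c) (Fin d_c) ℂ) (L R : Fin d_c → ℂ),
          Ψ = fun i => L ⬝ᵥ (List.ofFn fun k => A (i k)).prod.mulVec R }) ≤
      d_c ^ 2 * Nat.choose (n + d_c ^ 2 * d_p - 1) (d_c ^ 2 * d_p - 1) := by
  calc _ ≤ Fintype.card (Sym (Fin d_p × Fin d_c × Fin d_c) n × Fin d_c × Fin d_c) :=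
        finrank_span_simps_le ℂ
    _ = d_c ^ 2 * Nat.multichoose (d_c ^ 2 * d_p) n := by
        simp only [Fintype.card_prod, Sym.card_sym_eq_multichoose, Fintype.card_fin]
        ring_nf
    _ ≤ _ := Nat.mul_le_mul_left _ (Nat.multichoose_le_choose_pred _ _)
end

section
/- Fix natural numbers m, d_p, d_c, D, site tensors A : Fin (2·m) → Fin d_p → Matrix (Fin d_c) (Fin d_c) ℂ, and for each k : Fin m a matrix V k : Matrix (Fin D) (Fin d_p × Fin d_p) ℂ. Define new site tensors B : Fin m → Fin D → Matrix (Fin d_c) (Fin d_c) ℂ by B k j = ∑_{(i₁,i₂) : Fin d_p × Fin d_p} (V k) j (i₁,i₂) • ((A (2k) i₁) * (A (2k+1) i₂)). Then for all boundary vectors L, R : Fin d_c → ℂ and all j : Fin m → Fin D: ∑_{i : Fin (2m) → Fin d_p} (∏_{k : Fin m} (V k) (j k) (i (2k), i (2k+1))) · ( L ⬝ᵥ ((A 0 (i 0)) * (A 1 (i 1)) * ⋯ * (A (2m-1) (i (2m-1)))) *ᵥ R ) = L ⬝ᵥ ((B 0 (j 0)) * (B 1 (j 1)) * ⋯ * (B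 (m-1) (j (m-1)))) *ᵥ R. That is, applying the maps V k pairwise to adjacent sites of a matrix product state yields again a matrix product state on m sites with the same bond dimension d_c and site tensors B. -/
/-!
Substituting `B k (j k) = ∑ p, V k (j k) p • (A (2k) p.1 * A (2k+1) p.2)` and multiplying out the
ordered product of these sums gives a sum over choices `σ : Fin m → Fin d_p × Fin d_p` of one
pair per block. The scalars factor out as `∏ k, V k (j k) (σ k)`, a choice of pairs is the same
as a configuration `i : Fin (2m) → Fin d_p` of the physical indices, and the product of the
blocked matrices is the product over all `2m` sites. Linearity of `M ↦ L ⬝ᵥ M *ᵥ R` concludes.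
-/

open Matrix

def finTwoMulArrowEquiv (X : Type*) (m : ℕ) : (Fin (2 * m) → X) ≃ (Fin m → X × X) :=
  (((finCongr (mul_comm 2 m)).trans finProdFinEquiv.symm).arrowCongr (Equiv.refl X)).trans
    ((Equiv.curry _ _ _).trans ((Equiv.refl _).arrowCongr (finTwoArrowEquiv X)))

@[simp]
theorem finTwoMulArrowEquiv_apply {X : Type*} {m : ℕ} (i : Fin (2 * m) → X) (k : Fin m) :
    finTwoMulArrowEquiv X m i k = (i ⟨2 * k, by omega⟩, i ⟨2 * k + 1, by omega⟩) := by
  refine Prod.ext (congrArg i ?_) (congrArg i ?_) <;> ext <;> simp; omega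

namespace List

theorem prod_ofFn_sum {R P : Type*} [Semiring R] [Fintype P] :
    ∀ {n : ℕ} (f : Fin n → P → R),
      (ofFn fun k => ∑ p, f k p).prod = ∑ σ : Fin n → P, (ofFn fun k => f k (σ k)).prod
  | 0, _ => by simp
  | n + 1, f => by
    rw [← (Fin.consEquiv fun _ => P).sum_comp, Fintype.sum_prod_type]
    simp only [ofFn_succ, prod_cons, prod_ofFn_sum fun k => f k.succ, Finset.sum_mul_sum,
      Fin.consEquiv_apply, Fin.cons_zero, Fin.cons_succ]

theorem prod_ofFn_smul {S M : Type*} [CommMonoid S] [Monoid M] [MulAction S M]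
    [IsScalarTower S M M] [SMulCommClass S M M] :
    ∀ {n : ℕ} (c : Fin n → S) (f : Fin n → M),
      (ofFn fun k => c k • f k).prod = (∏ k, c k) • (ofFn f).prod
  | 0, _, _ => by simp
  | n + 1, c, f => by
    simp only [ofFn_succ, prod_cons, Fin.prod_univ_succ,
      prod_ofFn_smul (fun k => c k.succ) fun k => f k.succ, smul_mul_smul_comm]

theorem prod_ofFn_two_mul {M : Type*} [Monoid M] {m : ℕ} (f : Fin (2 * m) → M) :
    (ofFn f).prod =
      (ofFn fun k : Fin m => f ⟨2 * k, by omega⟩ * f ⟨2 * k + 1, by omega⟩).prod := by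
  rw [ofFn_mul', prod_flatten, map_ofFn]
  simp [Function.comp_def]

theorem prod_ofFn_sum_pairs {S R X : Type*} [CommSemiring S] [Semiring R] [Algebra S R]
    [Fintype X] {m : ℕ} (c : Fin m → X × X → S) (g : Fin (2 * m) → X → R) :
    (ofFn fun k : Fin m => ∑ p : X × X,
        c k p • (g ⟨2 * k, by omega⟩ p.1 * g ⟨2 * k + 1, by omega⟩ p.2)).prod =
      ∑ i : Fin (2 * m) → X,
        (∏ k : Fin m, c k (i ⟨2 * k, by omega⟩, i ⟨2 * k + 1, by omega⟩)) •
          (ofFn fun t => g t (i t)).prod := by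
  rw [prod_ofFn_sum, eq_comm]
  refine Fintype.sum_equiv (finTwoMulArrowEquiv X m) _ _ fun i => ?_
  rw [prod_ofFn_smul, prod_ofFn_two_mul]
  simp only [finTwoMulArrowEquiv_apply]

end List

/-- Pairwise blocking of an MPS: applying a map `V k` to each adjacent
pair of sites of a matrix product state yields again a matrix product state on `m` sites
with the same bond dimension `d_c` and site tensors `B`. -/
theorem mps_pairwise_blocking
    (m d_p d_c D : ℕ)
    (A : Fin (2 * m) → Fin d_p → Matrix (Fin d_c) (Fin d_c) ℂ)
    (V : Fin m → Matrix (Fin D) (Fin d_p × Fin d_p) ℂ)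
    (B : Fin m → Fin D → Matrix (Fin d_c) (Fin d_c) ℂ)
    (hB : ∀ (k : Fin m) (j : Fin D),
      B k j = ∑ p : Fin d_p × Fin d_p,
        V k j p •
          (A ⟨2 * k.1, by have := k.2; omega⟩ p.1 *
           A ⟨2 * k.1 + 1, by have := k.2; omega⟩ p.2)) :
    ∀ (L R : Fin d_c → ℂ) (j : Fin m → Fin D),
      ∑ i : Fin (2 * m) → Fin d_p,
        (∏ k : Fin m,
            V k (j k) (i ⟨2 * k.1, by have := k.2; omega⟩,
                       i ⟨2 * k.1 + 1, by have := k.2; omega⟩)) *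
          (L ⬝ᵥ (List.ofFn fun t => A t (i t)).prod.mulVec R) =
      L ⬝ᵥ (List.ofFn fun k => B k (j k)).prod.mulVec R := by
  intro L R j
  simp only [hB, List.prod_ofFn_sum_pairs (fun k => V k (j k)) A, sum_mulVec, smul_mulVec,
    dotProduct_sum, dotProduct_smul, smul_eq_mul]
end

section
/- Let r be a natural number and let u, v : Fin r → ℂ be orthonormal column vectors in ℂ^r (uᴴu = 1, vᴴv = 1, uᴴv = 0), viewed as r×1 matrices. Define the six unit vectors ψ_{x,±} = (u ± v)/√2, ψ_{y,±} = (u ± i·v)/√2, ψ_{z,+} = u, ψ_{z,-} = v, the unitaries U_{α,s} = 1 − 2·ψ_{α,s}ψ_{α,s}ᴴ, and the projection P = u·uᴴ + v·vᴴ. Then for every matrix ρ ∈ Matrix (Fin r) (Fin r) ℂ: (1/6) · ∑_{α ∈ {x,y,z}} ∑_{s ∈ {+,−}} U_{α,s} * ρ * U_{α,s} = (2/3)·(Matrix.trace (P * ρ)) • P − (1/3) • (P * ρ * P) + (1 − P) * ρ * (1 − P). -/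
open Matrix

/-- Reflection `1 − 2 ψψᴴ` about the vector `ψ`. -/
noncomputable def reflU {r : ℕ} (ψ : Fin r → ℂ) : Matrix (Fin r) (Fin r) ℂ :=
  1 - (2 : ℂ) • Matrix.vecMulVec ψ (star ψ)

/-- The six fiducial states `(u ± v)/√2`, `(u ± i·v)/√2`, `u`, `v` built from a pair
`u, v` of vectors. -/
noncomputable def sixStates {r : ℕ} (u v : Fin r → ℂ) : Fin 6 → (Fin r → ℂ) :=
  ![((Real.sqrt 2 : ℂ))⁻¹ • (u + v),
    ((Real.sqrt 2 : ℂ))⁻¹ • (u - v),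
    ((Real.sqrt 2 : ℂ))⁻¹ • (u + Complex.I • v),
    ((Real.sqrt 2 : ℂ))⁻¹ • (u - Complex.I • v),
    u, v]

/-!
Write `W = [u v]` for the `r × 2` matrix with columns `u` and `v`. Each of the six states is `W`
applied to one of the six eigenvectors of the Pauli matrices on `ℂ²`, so its projector
`Q_a = ψ_a ψ_aᴴ` is `W q_a Wᴴ` for the corresponding qubit projector `q_a`, and `P = W Wᴴ`. The qubit
projectors satisfy `∑ q_a = 3` and `∑ q_a σ q_a = tr σ + σ` (they form a 2-design), and
conjugating by `W` turns these into `∑ Q_a = 3P` and `∑ Q_a ρ Q_a = Tr(Pρ) P + PρP`. Expanding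
each `(1 - 2Q_a) ρ (1 - 2Q_a)` and averaging gives the identity.
-/

lemma sum_one_sub_two_smul_mul_mul_one_sub_two_smul {ι 𝕜 A : Type*} [Fintype ι] [CommRing 𝕜]
    [Ring A] [Algebra 𝕜 A] (Q : ι → A) (ρ : A) :
    ∑ a, (1 - (2 : 𝕜) • Q a) * ρ * (1 - (2 : 𝕜) • Q a) =
      (Fintype.card ι : 𝕜) • ρ - (2 : 𝕜) • ((∑ a, Q a) * ρ + ρ * ∑ a, Q a)
        + (4 : 𝕜) • ∑ a, Q a * ρ * Q a := by
  have expand (a : ι) : (1 - (2 : 𝕜) • Q a) * ρ * (1 - (2 : 𝕜) • Q a) =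
      ρ - (2 : 𝕜) • (Q a * ρ + ρ * Q a) + (4 : 𝕜) • (Q a * ρ * Q a) := by
    simp only [sub_mul, mul_sub, one_mul, mul_one, smul_mul_assoc, mul_smul_comm]
    module
  simp only [expand, Finset.sum_add_distrib, Finset.sum_sub_distrib, ← Finset.smul_sum,
    Finset.sum_mul, Finset.mul_sum, Finset.sum_const, Finset.card_univ, Nat.cast_smul_eq_nsmul]

lemma vecMulVec_mulVec_star {m n α : Type*} [Fintype n] [CommSemiring α] [StarRing α]
    (W : Matrix m n α) (x : n → α) :
    vecMulVec (W *ᵥ x) (star (W *ᵥ x)) = W * vecMulVec x (star x) * Wᴴ := by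
  rw [star_mulVec, ← vecMulVec_mul, ← mul_vecMulVec]

lemma vecMulVec_inv_sqrt_two_smul {n : Type*} (w : n → ℂ) :
    vecMulVec ((Real.sqrt 2 : ℂ)⁻¹ • w) (star ((Real.sqrt 2 : ℂ)⁻¹ • w))
      = (1 / 2 : ℂ) • vecMulVec w (star w) := by
  have h : (Real.sqrt 2 : ℂ)⁻¹ * star (Real.sqrt 2 : ℂ)⁻¹ = 1 / 2 := by
    rw [star_inv₀, Complex.star_def, Complex.conj_ofReal, ← mul_inv, ← Complex.ofReal_mul,
      Real.mul_self_sqrt zero_le_two]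
    norm_num
  rw [star_smul, smul_vecMulVec, vecMulVec_smul, smul_smul, ← h]

lemma sixStates_mulVec {r s : ℕ} (W : Matrix (Fin r) (Fin s) ℂ) (x y : Fin s → ℂ) (a : Fin 6) :
    sixStates (W *ᵥ x) (W *ᵥ y) a = W *ᵥ sixStates x y a := by
  fin_cases a <;> simp [sixStates, mulVec_add, mulVec_sub, mulVec_smul]

noncomputable def qubitProj (a : Fin 6) : Matrix (Fin 2) (Fin 2) ℂ :=
  vecMulVec (sixStates ![1, 0] ![0, 1] a) (star (sixStates ![1, 0] ![0, 1] a))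

lemma sum_qubitProj : ∑ a, qubitProj a = (3 : ℂ) • 1 := by
  simp only [qubitProj, Fin.sum_univ_six, sixStates, Matrix.cons_val, vecMulVec_inv_sqrt_two_smul]
  ext i j
  fin_cases i <;> fin_cases j <;>
    simp [vecMulVec_apply, -cons_vecMulVec, -vecMulVec_cons] <;> ring_nf

lemma sum_qubitProj_mul_mul_qubitProj (σ : Matrix (Fin 2) (Fin 2) ℂ) :
    ∑ a, qubitProj a * σ * qubitProj a = σ.trace • 1 + σ := by
  simp only [qubitProj, Fin.sum_univ_six, sixStates, Matrix.cons_val, vecMulVec_inv_sqrt_two_smul]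
  ext i j
  fin_cases i <;> fin_cases j <;>
    simp [vecMulVec_apply, mul_apply, Fin.sum_univ_two, trace, -cons_vecMulVec,
      -vecMulVec_cons] <;> ring_nf <;> simp <;> ring

def pairMatrix {r : ℕ} (u v : Fin r → ℂ) : Matrix (Fin r) (Fin 2) ℂ :=
  of fun i k => ![u i, v i] k

lemma pairMatrix_mul_conjTranspose {r : ℕ} (u v : Fin r → ℂ) :
    pairMatrix u v * (pairMatrix u v)ᴴ = vecMulVec u (star u) + vecMulVec v (star v) := by
  ext i j
  simp [pairMatrix, mul_apply, Fin.sum_univ_two, vecMulVec_apply]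

section
variable {r : ℕ} (u v : Fin r → ℂ)

lemma sixStates_eq_pairMatrix_mulVec (a : Fin 6) :
    sixStates u v a = pairMatrix u v *ᵥ sixStates ![1, 0] ![0, 1] a := by
  rw [← sixStates_mulVec]
  congr 1 <;> ext i <;> simp [pairMatrix, mulVec, dotProduct, Fin.sum_univ_two]

lemma vecMulVec_sixStates (a : Fin 6) :
    vecMulVec (sixStates u v a) (star (sixStates u v a))
      = pairMatrix u v * qubitProj a * (pairMatrix u v)ᴴ := by
  rw [sixStates_eq_pairMatrix_mulVec, vecMulVec_mulVec_star, qubitProj]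

variable {P : Matrix (Fin r) (Fin r) ℂ}

lemma sum_vecMulVec_sixStates (hP : P = vecMulVec u (star u) + vecMulVec v (star v)) :
    ∑ a, vecMulVec (sixStates u v a) (star (sixStates u v a)) = (3 : ℂ) • P := by
  simp only [vecMulVec_sixStates, ← Matrix.mul_sum, ← Matrix.sum_mul, sum_qubitProj,
    Matrix.mul_smul, Matrix.mul_one, Matrix.smul_mul, pairMatrix_mul_conjTranspose, hP]

lemma sum_vecMulVec_sixStates_mul_mul (hP : P = vecMulVec u (star u) + vecMulVec v (star v))
    (ρ : Matrix (Fin r) (Fin r) ℂ) :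
    ∑ a, vecMulVec (sixStates u v a) (star (sixStates u v a)) * ρ *
        vecMulVec (sixStates u v a) (star (sixStates u v a))
      = (P * ρ).trace • P + P * ρ * P := by
  set W := pairMatrix u v
  have hQ (a : Fin 6) : vecMulVec (sixStates u v a) (star (sixStates u v a)) =
      W * qubitProj a * Wᴴ := vecMulVec_sixStates u v a
  have hWP : W * Wᴴ = P := hP ▸ pairMatrix_mul_conjTranspose u v
  calc _ = W * (∑ a, qubitProj a * (Wᴴ * ρ * W) * qubitProj a) * Wᴴ := by
        rw [Matrix.mul_sum, Matrix.sum_mul]; simp only [hQ, Matrix.mul_assoc]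
    _ = W * ((Wᴴ * ρ * W).trace • 1 + Wᴴ * ρ * W) * Wᴴ := by
        rw [sum_qubitProj_mul_mul_qubitProj]
    _ = _ := by
        rw [trace_mul_cycle, ← hWP]
        simp only [Matrix.mul_add, Matrix.add_mul, Matrix.mul_smul, Matrix.smul_mul,
          Matrix.mul_one, Matrix.mul_assoc]

end

theorem six_reflections_channel_identity_general
    (r : ℕ) (u v : Fin r → ℂ)
    (P : Matrix (Fin r) (Fin r) ℂ)
    (hP : P = Matrix.vecMulVec u (star u) + Matrix.vecMulVec v (star v))
    (ρ : Matrix (Fin r) (Fin r) ℂ) :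
    (1 / 6 : ℂ) • ∑ a : Fin 6, reflU (sixStates u v a) * ρ * reflU (sixStates u v a) =
      ((2 / 3 : ℂ) * (P * ρ).trace) • P - (1 / 3 : ℂ) • (P * ρ * P)
        + (1 - P) * ρ * (1 - P) := by
  simp only [reflU]
  rw [sum_one_sub_two_smul_mul_mul_one_sub_two_smul, sum_vecMulVec_sixStates u v hP,
    sum_vecMulVec_sixStates_mul_mul u v hP, Fintype.card_fin]
  simp only [sub_mul, mul_sub, one_mul, mul_one, smul_mul_assoc, mul_smul_comm, smul_add, mul_smul]
  module

/-- For the six fiducial states built from an orthonormal pair `u, v`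
spanning a two-dimensional subspace with projector `P = uuᴴ + vvᴴ`, the average of the
six reflections acts as
`(2/3)·Tr(Pρ)·P − (1/3)·PρP + (1−P)ρ(1−P)` on every matrix `ρ`. -/
theorem six_reflections_channel_identity
    (r : ℕ) (u v : Fin r → ℂ)
    (huu : star u ⬝ᵥ u = 1) (hvv : star v ⬝ᵥ v = 1) (huv : star u ⬝ᵥ v = 0)
    (P : Matrix (Fin r) (Fin r) ℂ)
    (hP : P = Matrix.vecMulVec u (star u) + Matrix.vecMulVec v (star v))
    (ρ : Matrix (Fin r) (Fin r) ℂ) :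
    (1 / 6 : ℂ) • ∑ a : Fin 6, reflU (sixStates u v a) * ρ * reflU (sixStates u v a) =
      ((2 / 3 : ℂ) * (P * ρ).trace) • P - (1 / 3 : ℂ) • (P * ρ * P)
        + (1 - P) * ρ * (1 - P) :=
  six_reflections_channel_identity_general r u v P hP ρ
end

section
/- Let r be a natural number, let ψ₁, ψ₂ : Fin r → ℂ be orthonormal column vectors in ℂ^r (viewed as r×1 matrices), let a be any vector in the ℂ-linear span of {ψ₁, ψ₂}, and let w : Fin r → ℂ satisfy ψ₁ᴴ w = 0 and ψ₂ᴴ w = 0. Then, with U_s = 1 − 2·ψ_s ψ_sᴴ for s ∈ {1,2}: U₁ * (a·wᴴ) * U₁ + U₂ * (a·wᴴ) * U₂ = 0, and likewise U₁ * (w·aᴴ) * U₁ + U₂ * (w·aᴴ) * U₂ = 0. -/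
/-!
As `wᴴ ψₛ = 0`, the right-hand factor `Uₛ` fixes `a wᴴ`, so the sum is
`(U₁ a + U₂ a) wᴴ = 2 (a - P a) wᴴ` with `P = ψ₁ψ₁ᴴ + ψ₂ψ₂ᴴ` the projection onto
`span {ψ₁, ψ₂}`, which fixes `a`. The second identity is the conjugate transpose of the
first, the reflections being Hermitian.
-/

open Matrix

section Orthonormal

variable {n R : Type*} [Fintype n] [CommRing R] [StarRing R]

theorem Matrix.star_dotProduct_eq_zero_comm {u v : n → R} (h : star u ⬝ᵥ v = 0) :
    star v ⬝ᵥ u = 0 := by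
  rw [star_dotProduct, h, star_zero]

theorem Matrix.star_dotProduct_smul_add_eq_self_of_mem_span_pair {ψ₁ ψ₂ a : n → R}
    (h11 : star ψ₁ ⬝ᵥ ψ₁ = 1) (h22 : star ψ₂ ⬝ᵥ ψ₂ = 1) (h12 : star ψ₁ ⬝ᵥ ψ₂ = 0)
    (ha : a ∈ Submodule.span R {ψ₁, ψ₂}) :
    (star ψ₁ ⬝ᵥ a) • ψ₁ + (star ψ₂ ⬝ᵥ a) • ψ₂ = a := by
  obtain ⟨c₁, c₂, rfl⟩ := Submodule.mem_span_pair.mp ha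
  simp [dotProduct_add, h11, h22, h12, star_dotProduct_eq_zero_comm h12]

end Orthonormal

section Reflection

variable {r : ℕ}

theorem reflU_isHermitian (ψ : Fin r → ℂ) : (reflU ψ).IsHermitian := by
  simp [reflU, IsHermitian, conjTranspose_sub, conjTranspose_smul, conjTranspose_vecMulVec]

theorem reflU_mulVec (ψ u : Fin r → ℂ) :
    reflU ψ *ᵥ u = u - (2 * (star ψ ⬝ᵥ u)) • ψ := by
  simp [reflU, sub_mulVec, smul_mulVec, vecMulVec_mulVec, smul_smul]

theorem vecMulVec_star_mul_reflU {ψ w : Fin r → ℂ} (hw : star ψ ⬝ᵥ w = 0) (u : Fin r → ℂ) :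
    vecMulVec u (star w) * reflU ψ = vecMulVec u (star w) := by
  simp [reflU, mul_sub, vecMulVec_mul_vecMulVec, star_dotProduct_eq_zero_comm hw]

theorem reflU_mulVec_add_reflU_mulVec {ψ₁ ψ₂ a : Fin r → ℂ}
    (h11 : star ψ₁ ⬝ᵥ ψ₁ = 1) (h22 : star ψ₂ ⬝ᵥ ψ₂ = 1) (h12 : star ψ₁ ⬝ᵥ ψ₂ = 0)
    (ha : a ∈ Submodule.span ℂ {ψ₁, ψ₂}) :
    reflU ψ₁ *ᵥ a + reflU ψ₂ *ᵥ a = 0 := by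
  have hP := star_dotProduct_smul_add_eq_self_of_mem_span_pair h11 h22 h12 ha
  rw [reflU_mulVec, reflU_mulVec]
  calc _ = (2 : ℂ) • (a - ((star ψ₁ ⬝ᵥ a) • ψ₁ + (star ψ₂ ⬝ᵥ a) • ψ₂)) := by module
    _ = 0 := by rw [hP, sub_self, smul_zero]

end Reflection

/-- Off-block-diagonal vanishing: for an orthonormal pair `ψ₁, ψ₂`,
any `a` in their span and any `w` orthogonal to both, the two reflections annihilate
`a wᴴ` and `w aᴴ` on average. -/
theorem reflections_annihilate_offdiagonal
    (r : ℕ) (ψ₁ ψ₂ : Fin r → ℂ)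
    (h11 : star ψ₁ ⬝ᵥ ψ₁ = 1) (h22 : star ψ₂ ⬝ᵥ ψ₂ = 1) (h12 : star ψ₁ ⬝ᵥ ψ₂ = 0)
    (a : Fin r → ℂ) (ha : a ∈ Submodule.span ℂ {ψ₁, ψ₂})
    (w : Fin r → ℂ) (hw1 : star ψ₁ ⬝ᵥ w = 0) (hw2 : star ψ₂ ⬝ᵥ w = 0) :
    reflU ψ₁ * Matrix.vecMulVec a (star w) * reflU ψ₁ +
        reflU ψ₂ * Matrix.vecMulVec a (star w) * reflU ψ₂ = 0 ∧
    reflU ψ₁ * Matrix.vecMulVec w (star a) * reflU ψ₁ +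
        reflU ψ₂ * Matrix.vecMulVec w (star a) * reflU ψ₂ = 0 := by
  have h : reflU ψ₁ * vecMulVec a (star w) * reflU ψ₁ +
      reflU ψ₂ * vecMulVec a (star w) * reflU ψ₂ = 0 := by
    rw [Matrix.mul_assoc, Matrix.mul_assoc, vecMulVec_star_mul_reflU hw1,
      vecMulVec_star_mul_reflU hw2, mul_vecMulVec, mul_vecMulVec, ← add_vecMulVec,
      reflU_mulVec_add_reflU_mulVec h11 h22 h12 ha, zero_vecMulVec]
  refine ⟨h, ?_⟩
  simpa [conjTranspose_mul, (reflU_isHermitian _).eq, Matrix.mul_assoc] using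
    congrArg conjTranspose h
end
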